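/- arXiv:2506.20953 — 5 statements merged into one kernel-verified Lean document; each statement's English description precedes it below -/
import Mathlib

section
/- Let m > 0, let f : ℝ → ℝ be C¹ with f(φ*) = 0 and f'(s) ≤ -m² for all s, and let F(φ) = ∫_{φ*}^{φ} f. Suppose U : [0,∞) → ℝ is C¹ with U(t) > φ* and U'(t) < 0 for all t ≥ 0 and U'(t)² = -2F(U(t)) for all t ≥ 0. Then U(t) - φ* ≤ (U(0) - φ*) e^{-m t} for all t ≥ 0. -/
/-- Exponential decay of a decreasing zero-energy trajectory above the equilibrium. -/
theorem stmt_4 (m : ℝ) (hm : 0 < m) (f : ℝ → ℝ) (hf : ContDiff ℝ 1 f)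
    (φstar : ℝ) (hzero : f φstar = 0) (hderiv : ∀ s : ℝ, deriv f s ≤ -m ^ 2)
    (F : ℝ → ℝ) (hF : ∀ φ : ℝ, F φ = ∫ s in φstar..φ, f s)
    (U : ℝ → ℝ) (hU : ContDiff ℝ 1 U)
    (hgt : ∀ t : ℝ, 0 ≤ t → φstar < U t)
    (hdec : ∀ t : ℝ, 0 ≤ t → deriv U t < 0)
    (henergy : ∀ t : ℝ, 0 ≤ t → (deriv U t) ^ 2 = -2 * F (U t)) :
    ∀ t : ℝ, 0 ≤ t → U t - φstar ≤ (U 0 - φstar) * Real.exp (-m * t) := by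
  have hfdiff : Differentiable ℝ f := hf.differentiable one_ne_zero
  have hfcont : Continuous f := hf.continuous
  -- Step 1: f φ ≤ -m^2 * (φ - φstar) for φ ≥ φstar
  have hstep1 : ∀ φ : ℝ, φstar ≤ φ → f φ ≤ -m ^ 2 * (φ - φstar) := by
    intro φ hφ
    rcases eq_or_lt_of_le hφ with h | h
    · simp [← h, hzero]
    · obtain ⟨c, hc, hc'⟩ := exists_deriv_eq_slope f h hfcont.continuousOn
        (hfdiff.differentiableOn)
      have := hderiv c
      rw [hc'] at this
      rw [hzero] at this
      have h1 : f φ / (φ - φstar) ≤ -m ^ 2 := by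
        have : (f φ - 0) / (φ - φstar) ≤ -m ^ 2 := this
        simpa using this
      have hpos : 0 < φ - φstar := by linarith
      calc f φ = f φ / (φ - φstar) * (φ - φstar) := by field_simp
        _ ≤ -m ^ 2 * (φ - φstar) := by
            apply mul_le_mul_of_nonneg_right h1 hpos.le
  -- Step 2: F φ ≤ -m^2 * (φ - φstar)^2 / 2 for φ ≥ φstar
  have hstep2 : ∀ φ : ℝ, φstar ≤ φ → F φ ≤ -m ^ 2 * (φ - φstar) ^ 2 / 2 := by
    intro φ hφ
    rw [hF]
    have hmono : (∫ s in φstar..φ, f s) ≤ ∫ s in φstar..φ, -m ^ 2 * (s - φstar) := by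
      apply intervalIntegral.integral_mono_on hφ
        (hfcont.intervalIntegrable _ _)
        ((continuous_const.mul (continuous_id.sub continuous_const)).intervalIntegrable _ _)
      intro s hs
      exact hstep1 s hs.1
    refine hmono.trans_eq ?_
    have : (∫ s in φstar..φ, -m ^ 2 * (s - φstar)) =
        -m ^ 2 * ∫ s in φstar..φ, (s - φstar) := by
      rw [intervalIntegral.integral_const_mul]
    rw [this]
    have : (∫ s in φstar..φ, (s - φstar)) = (φ - φstar) ^ 2 / 2 := by
      have h := intervalIntegral.integral_comp_sub_right (a := φstar) (b := φ)
        (fun x => x) φstar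
      rw [h, integral_id]
      ring
    rw [this]; ring
  -- Step 3: deriv U t ≤ -m * (U t - φstar)
  have hstep3 : ∀ t : ℝ, 0 ≤ t → deriv U t ≤ -(m * (U t - φstar)) := by
    intro t ht
    have h1 := henergy t ht
    have h2 := hstep2 (U t) (hgt t ht).le
    have h3 : m ^ 2 * (U t - φstar) ^ 2 ≤ (deriv U t) ^ 2 := by
      rw [h1]; nlinarith
    have hd := hdec t ht
    have hk : 0 ≤ m * (U t - φstar) := by
      have h := hgt t ht
      nlinarith
    nlinarith [sq_nonneg (deriv U t + m * (U t - φstar))]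
  -- Step 4: g t = (U t - φstar) * exp (m * t) is antitone on Ici 0
  set g : ℝ → ℝ := fun t => (U t - φstar) * Real.exp (m * t) with hg
  have hUdiff : Differentiable ℝ U := hU.differentiable one_ne_zero
  have hgderiv : ∀ t : ℝ, HasDerivAt g
      ((deriv U t + m * (U t - φstar)) * Real.exp (m * t)) t := by
    intro t
    have h1 : HasDerivAt (fun t => U t - φstar) (deriv U t) t :=
      (hUdiff t).hasDerivAt.sub_const φstar
    have h2 : HasDerivAt (fun t => Real.exp (m * t)) (Real.exp (m * t) * m) t := by
      have : HasDerivAt (fun t : ℝ => m * t) m t := by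
        simpa using (hasDerivAt_id t).const_mul m
      simpa using this.exp
    have : HasDerivAt (fun t => (U t - φstar) * Real.exp (m * t))
        (deriv U t * Real.exp (m * t) + (U t - φstar) * (Real.exp (m * t) * m)) t := h1.mul h2
    convert this using 1
    ring
  have hanti : AntitoneOn g (Set.Ici 0) := by
    apply antitoneOn_of_deriv_nonpos (convex_Ici 0)
    · exact (Continuous.mul ((hU.continuous.sub continuous_const))
        (Real.continuous_exp.comp (continuous_const.mul continuous_id))).continuousOn
    · intro x _
      exact (hgderiv x).differentiableAt.differentiableWithinAt
    · intro x hx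
      rw [interior_Ici] at hx
      rw [(hgderiv x).deriv]
      have h3 := hstep3 x hx.le
      have : deriv U x + m * (U x - φstar) ≤ 0 := by linarith
      exact mul_nonpos_of_nonpos_of_nonneg this (Real.exp_nonneg _)
  intro t ht
  have := hanti (Set.self_mem_Ici) ht ht
  simp only [hg, mul_zero, Real.exp_zero, mul_one] at this
  have hexp : 0 < Real.exp (m * t) := Real.exp_pos _
  have : U t - φstar ≤ (U 0 - φstar) / Real.exp (m * t) := by
    rw [le_div_iff₀ hexp]; linarith
  rw [neg_mul, Real.exp_neg]
  calc U t - φstar ≤ (U 0 - φstar) / Real.exp (m * t) := this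
    _ = (U 0 - φstar) * (Real.exp (m * t))⁻¹ := by ring
end

section
/- Let m > 0, let f : ℝ → ℝ be C¹ with f(φ*) = 0 and f'(s) ≤ -m² for all s, and let F(φ) = ∫_{φ*}^{φ} f. Suppose U : [0,∞) → ℝ is a C² solution of U'' + f(U) = 0 with U(t) > φ*, U'(t) < 0 for all t ≥ 0, and U'(t)² = -2F(U(t)) for all t. Then |U'(t)| ≤ |U'(0)| e^{-m t} for all t ≥ 0. -/
/-- Exponential decay of the derivative of a boundary-layer profile. -/
theorem stmt_5 (m : ℝ) (hm : 0 < m) (f : ℝ → ℝ) (hf : ContDiff ℝ 1 f)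
    (φstar : ℝ) (hzero : f φstar = 0) (hderiv : ∀ s : ℝ, deriv f s ≤ -m ^ 2)
    (F : ℝ → ℝ) (hF : ∀ φ : ℝ, F φ = ∫ s in φstar..φ, f s)
    (U : ℝ → ℝ) (hU : ContDiff ℝ 2 U)
    (hode : ∀ t : ℝ, 0 ≤ t → deriv (deriv U) t + f (U t) = 0)
    (hgt : ∀ t : ℝ, 0 ≤ t → φstar < U t)
    (hdec : ∀ t : ℝ, 0 ≤ t → deriv U t < 0)
    (henergy : ∀ t : ℝ, 0 ≤ t → (deriv U t) ^ 2 = -2 * F (U t)) :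
    ∀ t : ℝ, 0 ≤ t → |deriv U t| ≤ |deriv U 0| * Real.exp (-m * t) := by
  have hfc : Continuous f := hf.continuous
  have hfd : Differentiable ℝ f := hf.differentiable one_ne_zero
  -- f is strictly decreasing
  have hanti : StrictAnti f := by
    apply strictAnti_of_deriv_neg
    intro x
    exact lt_of_le_of_lt (hderiv x) (by nlinarith)
  -- F has derivative f
  have hFd : ∀ φ, HasDerivAt F (f φ) φ := by
    intro φ
    have : HasDerivAt (fun u => ∫ s in φstar..u, f s) (f φ) φ :=
      intervalIntegral.integral_hasDerivAt_right
        (hfc.intervalIntegrable _ _)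
        (hfc.stronglyMeasurableAtFilter _ _)
        (hfc.continuousAt)
    have hFe : F = fun u => ∫ s in φstar..u, f s := funext hF
    rw [hFe]; exact this
  have hF0 : F φstar = 0 := by rw [hF]; simp
  -- Q φ = f φ ^ 2 + 2 m^2 F φ is nonneg on [φstar, ∞)
  set Q : ℝ → ℝ := fun φ => (f φ)^2 + 2 * m^2 * F φ with hQ
  have hQd : ∀ φ, HasDerivAt Q (2 * f φ * deriv f φ + 2 * m^2 * f φ) φ := by
    intro φ
    have h1 : HasDerivAt (fun φ => (f φ)^2) (2 * f φ * deriv f φ) φ := by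
      have : HasDerivAt (fun x => f x ^ 2) _ φ := ((hfd φ).hasDerivAt.pow 2)
      simpa [mul_comm, mul_assoc, mul_left_comm] using this
    have h2 : HasDerivAt (fun φ => 2 * m^2 * F φ) (2 * m^2 * f φ) φ :=
      (hFd φ).const_mul _
    exact h1.add h2
  have hQmono : MonotoneOn Q (Set.Ici φstar) := by
    apply monotoneOn_of_deriv_nonneg (convex_Ici _)
    · have hFcont : Continuous F := by
        have : Differentiable ℝ F := fun φ => (hFd φ).differentiableAt
        exact this.continuous
      exact ((hfc.pow 2).add (continuous_const.mul hFcont)).continuousOn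
    · intro x hx; exact (hQd x).differentiableAt.differentiableWithinAt
    · intro x hx
      rw [(hQd x).deriv]
      rw [interior_Ici] at hx
      have hfx : f x < 0 := by
        have := hanti hx; rwa [hzero] at this
      have := hderiv x
      nlinarith
  have hQ0 : Q φstar = 0 := by simp [hQ, hzero, hF0]
  have hQnn : ∀ φ, φstar ≤ φ → 0 ≤ Q φ := by
    intro φ hφ
    have := hQmono (Set.self_mem_Ici) hφ hφ
    rwa [hQ0] at this
  -- key pointwise inequality: f (U t) ≤ m * deriv U t
  have key : ∀ t, 0 ≤ t → f (U t) ≤ m * deriv U t := by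
    intro t ht
    have h1 : 0 ≤ Q (U t) := hQnn _ (hgt t ht).le
    have h2 := henergy t ht
    have hfx : f (U t) < 0 := by
      have := hanti (hgt t ht); rwa [hzero] at this
    have hU' := hdec t ht
    simp only [hQ] at h1
    have h3 : m^2 * (deriv U t)^2 = -2 * m^2 * F (U t) := by rw [h2]; ring
    have hsq : m^2 * (deriv U t)^2 ≤ (f (U t))^2 := by nlinarith
    nlinarith [mul_pos hm (neg_pos.mpr hU')]
  -- second derivative of U
  have hUd2 : Differentiable ℝ (deriv U) := by
    have hU2 : ContDiff ℝ (1 + 1) U := by norm_num; exact hU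
    exact ((contDiff_succ_iff_deriv.mp hU2).2.2).differentiable one_ne_zero
  set G : ℝ → ℝ := fun t => Real.exp (m * t) * (-(deriv U t)) with hG
  have hGd : ∀ t, HasDerivAt G
      (Real.exp (m * t) * m * (-(deriv U t)) + Real.exp (m * t) * (-(deriv (deriv U) t))) t := by
    intro t
    have he : HasDerivAt (fun t => Real.exp (m * t)) (Real.exp (m * t) * m) t :=
      (Real.hasDerivAt_exp (m * t)).comp t (by simpa using (hasDerivAt_id t).const_mul m)
    exact he.mul ((hUd2 t).hasDerivAt.neg)
  have hGanti : AntitoneOn G (Set.Ici (0:ℝ)) := by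
    apply antitoneOn_of_deriv_nonpos (convex_Ici _)
    · have : Continuous G := ((Real.continuous_exp.comp (continuous_const.mul continuous_id)).mul
        ((hU.continuous_deriv one_le_two).neg))
      exact this.continuousOn
    · intro x hx; exact (hGd x).differentiableAt.differentiableWithinAt
    · intro x hx
      rw [interior_Ici] at hx
      have hx0 : (0:ℝ) ≤ x := le_of_lt hx
      rw [(hGd x).deriv]
      have hO : deriv (deriv U) x = -(f (U x)) := by linarith [hode x hx0]
      rw [hO]
      have hk := key x hx0
      have he : 0 < Real.exp (m * x) := Real.exp_pos _
      nlinarith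
  intro t ht
  have := hGanti (Set.self_mem_Ici) ht ht
  simp only [hG] at this
  rw [mul_zero, Real.exp_zero, one_mul] at this
  rw [abs_of_neg (hdec t ht), abs_of_neg (hdec 0 le_rfl)]
  have he : 0 < Real.exp (m * t) := Real.exp_pos _
  have hexp : Real.exp (-m * t) = (Real.exp (m * t))⁻¹ := by
    rw [← Real.exp_neg]; ring_nf
  rw [hexp]
  calc -deriv U t = (Real.exp (m * t) * -deriv U t) * (Real.exp (m * t))⁻¹ := by
        field_simp
    _ ≤ (-deriv U 0) * (Real.exp (m * t))⁻¹ :=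
        mul_le_mul_of_nonneg_right this (by positivity)
end

section
/- Let c, h : [0,∞) → ℝ be continuous with c(t) < 0 and h(t) < 0 for all t ≥ 0. Suppose V : [0,∞) → ℝ is a bounded C² function satisfying V''(t) + c(t) V(t) = h(t) for all t > 0, V(0) > 0, and lim_{t→∞} V(t) = 0. Then V(t) > 0 for all t ≥ 0. -/
/-- At a local minimum of a C² function, the second derivative is nonnegative. -/
lemma second_deriv_nonneg_of_isLocalMin (f : ℝ → ℝ) (hf : ContDiff ℝ 2 f) (s : ℝ)
    (hmin : IsLocalMin f s) : 0 ≤ deriv (deriv f) s := by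
  by_contra hneg
  push_neg at hneg
  have h1 : ContDiff ℝ 1 (deriv f) := by
    have := (contDiff_succ_iff_deriv (n := 1)).mp (by exact_mod_cast hf)
    exact this.2.2
  have hdiff : Differentiable ℝ f := hf.differentiable (by norm_num)
  have hdiff' : Differentiable ℝ (deriv f) := h1.differentiable one_ne_zero
  have hd0 : deriv f s = 0 := hmin.deriv_eq_zero
  have hder : HasDerivAt (deriv f) (deriv (deriv f) s) s := (hdiff' s).hasDerivAt
  -- slope of deriv f tends to a negative number, so deriv f > 0 just left of s
  have hslope := hasDerivAt_iff_tendsto_slope.mp hder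
  have hev : ∀ᶠ x in nhdsWithin s (Set.Iio s), 0 < deriv f x := by
    have h2 : ∀ᶠ x in nhdsWithin s {s}ᶜ, slope (deriv f) s x < 0 :=
      hslope.eventually (eventually_lt_nhds hneg)
    have h3 : nhdsWithin s (Set.Iio s) ≤ nhdsWithin s {s}ᶜ := by
      apply nhdsWithin_mono
      intro x hx
      exact fun hxs => absurd hxs (ne_of_lt hx)
    filter_upwards [h3 h2, self_mem_nhdsWithin] with x hx hxs
    have hxs' : x < s := hxs
    rw [slope_def_field, div_neg_iff] at hx
    rcases hx with ⟨hA, hB⟩ | ⟨hA, hB⟩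
    · linarith
    · rw [hd0] at hA; linarith
  have hev2 : ∀ᶠ x in nhdsWithin s (Set.Iio s), f s ≤ f x :=
    nhdsWithin_le_nhds hmin
  obtain ⟨a, ha, hsub⟩ := mem_nhdsLT_iff_exists_Ioo_subset.mp
    ((hev.and hev2).filter_mono (le_refl _))
  obtain ⟨x, hx⟩ := Set.nonempty_Ioo.mpr (Set.mem_Iio.mp ha)
  obtain ⟨ξ, hξ, hξeq⟩ := exists_hasDerivAt_eq_slope f (deriv f) hx.2
    (hdiff.continuous.continuousOn) (fun y _ => (hdiff y).hasDerivAt)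
  have hξmem : ξ ∈ Set.Ioo a s := ⟨lt_trans hx.1 hξ.1, hξ.2⟩
  have hpos := (hsub hξmem).1
  have hle := (hsub hx).2
  have hxlt : x < s := hx.2
  have : 0 < (f s - f x) / (s - x) := hξeq ▸ hpos
  have h4 : 0 < f s - f x := by
    have := mul_pos this (sub_pos.mpr hxlt)
    rwa [div_mul_cancel₀] at this
    linarith
  linarith

/-- Sign property of the curvature-correction profile. -/
theorem stmt_14 (c h : ℝ → ℝ)
    (hc : ContinuousOn c (Set.Ici 0)) (hh : ContinuousOn h (Set.Ici 0))
    (hcneg : ∀ t : ℝ, 0 ≤ t → c t < 0) (hhneg : ∀ t : ℝ, 0 ≤ t → h t < 0)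
    (V : ℝ → ℝ) (hV : ContDiff ℝ 2 V)
    (hbdd : ∃ M : ℝ, ∀ t : ℝ, 0 ≤ t → |V t| ≤ M)
    (hode : ∀ t : ℝ, 0 < t → deriv (deriv V) t + c t * V t = h t)
    (hinit : 0 < V 0)
    (hlim : Filter.Tendsto V Filter.atTop (nhds 0)) :
    ∀ t : ℝ, 0 ≤ t → 0 < V t := by
  by_contra hcon
  push_neg at hcon
  obtain ⟨t₀, ht₀, hVt₀⟩ := hcon
  -- main claim: there is s > 0 which is a local min with V s ≤ 0
  have key : ∃ s : ℝ, 0 < s ∧ V s ≤ 0 ∧ IsLocalMin V s := by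
    by_cases hex : ∃ t : ℝ, 0 ≤ t ∧ V t < 0
    · obtain ⟨t₁, ht₁, hVt₁⟩ := hex
      have hhalf : V t₁ / 2 < 0 := by linarith
      have hev : ∀ᶠ t in Filter.atTop, V t₁ / 2 < V t :=
        hlim.eventually (eventually_gt_nhds hhalf)
      obtain ⟨T₀, hT₀⟩ := Filter.eventually_atTop.mp hev
      set T := max T₀ t₁ with hT
      have ht₁T : t₁ ≤ T := le_max_right _ _
      have hTmem : t₁ ∈ Set.Icc (0:ℝ) T := ⟨ht₁, ht₁T⟩
      obtain ⟨s, hsmem, hsmin⟩ := (isCompact_Icc (a := (0:ℝ)) (b := T)).exists_isMinOn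
        ⟨t₁, hTmem⟩ hV.continuous.continuousOn
      have hVs : V s ≤ V t₁ := hsmin hTmem
      have hVsneg : V s < 0 := lt_of_le_of_lt hVs hVt₁
      have hs0 : 0 < s := by
        rcases lt_or_eq_of_le hsmem.1 with h' | h'
        · exact h'
        · exfalso; have := hVsneg; rw [← h'] at this; linarith
      have hsT : s < T := by
        rcases lt_or_eq_of_le hsmem.2 with h' | h'
        · exact h'
        · exfalso
          have := hT₀ T (le_max_left _ _)
          rw [h'] at hVsneg hVs
          linarith
      refine ⟨s, hs0, le_of_lt hVsneg, ?_⟩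
      exact hsmin.isLocalMin (Icc_mem_nhds hs0 hsT)
    · push_neg at hex
      have hVt₀0 : V t₀ = 0 := le_antisymm hVt₀ (hex t₀ ht₀)
      have ht₀pos : 0 < t₀ := by
        rcases lt_or_eq_of_le ht₀ with h' | h'
        · exact h'
        · exfalso; rw [← h'] at hVt₀; linarith
      refine ⟨t₀, ht₀pos, le_of_eq hVt₀0, ?_⟩
      have : Set.Ici (0:ℝ) ∈ nhds t₀ := Ici_mem_nhds ht₀pos
      filter_upwards [this] with x hx
      rw [hVt₀0]
      exact hex x hx
  obtain ⟨s, hs, hVs, hmin⟩ := key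
  have h2 := second_deriv_nonneg_of_isLocalMin V hV s hmin
  have hode' := hode s hs
  have hcs := hcneg s (le_of_lt hs)
  have hhs := hhneg s (le_of_lt hs)
  nlinarith [mul_nonneg (le_of_lt (neg_pos.mpr hcs)) (neg_nonneg.mpr hVs)]
end

section
/- Let (Ω, μ) be a measure space with 0 < μ(Ω) < ∞, let φ : Ω → ℝ be measurable with φ(y) ≤ M for μ-a.e. y ∈ Ω, and let m_i > 0, z_i ∈ ℝ \ {0} for i = 1,…,I satisfy Σ_{i=1}^{I} m_i z_i = 0. Assume each integral ∫_Ω exp(-z_i φ(y)) dμ(y) is finite and positive. Then Σ_{i=1}^{I} m_i z_i exp(-z_i M) / ∫_Ω exp(-z_i φ(y)) dμ(y) ≤ 0. -/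
open MeasureTheory in
/-- Key inequality behind the maximum principle for the charge-conserving PB equation. -/
theorem stmt_17 {Ω : Type*} [MeasurableSpace Ω] (μ : Measure Ω)
    (hμpos : 0 < μ Set.univ) (hμfin : μ Set.univ < ⊤)
    (φ : Ω → ℝ) (hφmeas : Measurable φ) (M : ℝ)
    (hφle : ∀ᵐ y ∂μ, φ y ≤ M)
    (I : ℕ) (m z : Fin I → ℝ) (hm : ∀ i, 0 < m i) (hz : ∀ i, z i ≠ 0)
    (hneutral : ∑ i, m i * z i = 0)
    (hint : ∀ i, Integrable (fun y => Real.exp (-(z i) * φ y)) μ)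
    (hintpos : ∀ i, 0 < ∫ y, Real.exp (-(z i) * φ y) ∂μ) :
    ∑ i, m i * z i * Real.exp (-(z i) * M) /
        ∫ y, Real.exp (-(z i) * φ y) ∂μ ≤ 0 := by
  haveI : IsFiniteMeasure μ := ⟨hμfin⟩
  set C : ℝ := (μ Set.univ).toReal with hC
  have hCpos : 0 < C := ENNReal.toReal_pos hμpos.ne' hμfin.ne
  have key : ∀ i, m i * z i * Real.exp (-(z i) * M) /
      ∫ y, Real.exp (-(z i) * φ y) ∂μ ≤ m i * z i / C := by
    intro i
    set A := ∫ y, Real.exp (-(z i) * φ y) ∂μ with hA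
    have hconst : ∫ _y : Ω, Real.exp (-(z i) * M) ∂μ = C * Real.exp (-(z i) * M) := by
      rw [integral_const]; simp [smul_eq_mul, hC, measureReal_def]
    have hexpM : (0:ℝ) < Real.exp (-(z i) * M) := Real.exp_pos _
    rcases lt_or_gt_of_ne (hz i) with hneg | hpos
    · -- z i < 0 : A ≤ C * exp(-z M), numerator ≤ 0
      have hle : A ≤ C * Real.exp (-(z i) * M) := by
        rw [← hconst]
        refine integral_mono_ae (hint i) (integrable_const _) ?_
        filter_upwards [hφle] with y hy
        exact Real.exp_le_exp.mpr (by nlinarith)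
      have hnum : m i * z i * Real.exp (-(z i) * M) ≤ 0 :=
        (mul_neg_of_neg_of_pos (mul_neg_of_pos_of_neg (hm i) hneg) hexpM).le
      calc m i * z i * Real.exp (-(z i) * M) / A
          ≤ m i * z i * Real.exp (-(z i) * M) / (C * Real.exp (-(z i) * M)) := by
            rw [div_le_div_iff₀ (hintpos i) (by positivity)]
            nlinarith
        _ = m i * z i / C := by
            field_simp
    · -- z i > 0 : C * exp(-z M) ≤ A, numerator ≥ 0
      have hle : C * Real.exp (-(z i) * M) ≤ A := by
        rw [← hconst]
        refine integral_mono_ae (integrable_const _) (hint i) ?_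
        filter_upwards [hφle] with y hy
        exact Real.exp_le_exp.mpr (by nlinarith)
      have hnum : 0 ≤ m i * z i * Real.exp (-(z i) * M) :=
        (mul_pos (mul_pos (hm i) hpos) hexpM).le
      calc m i * z i * Real.exp (-(z i) * M) / A
          ≤ m i * z i * Real.exp (-(z i) * M) / (C * Real.exp (-(z i) * M)) := by
            rw [div_le_div_iff₀ (hintpos i) (by positivity)]
            nlinarith
        _ = m i * z i / C := by
            field_simp
  calc ∑ i, m i * z i * Real.exp (-(z i) * M) / ∫ y, Real.exp (-(z i) * φ y) ∂μ
      ≤ ∑ i, m i * z i / C := Finset.sum_le_sum fun i _ => key i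
    _ = (∑ i, m i * z i) / C := by rw [Finset.sum_div]
    _ = 0 := by rw [hneutral, zero_div]
end

section
/- Let a < b, k > 0, and let h : [a,b] → ℝ be C² with h(r) ≥ 0 and h''(r) ≥ k² h(r) for all r ∈ (a,b). Then for every r ∈ [a,b], h(r) ≤ max(h(a), h(b)) · ( e^{-k(r-a)} + e^{-k(b-r)} ). -/
/-- Barrier comparison: a nonnegative function with h'' ≥ k²h on (a,b) decays
exponentially away from the endpoints. -/
theorem stmt_18 (a b k : ℝ) (hab : a < b) (hk : 0 < k)
    (h : ℝ → ℝ) (hh : ContDiffOn ℝ 2 h (Set.Icc a b))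
    (hpos : ∀ r ∈ Set.Ioo a b, 0 ≤ h r)
    (hconv : ∀ r ∈ Set.Ioo a b, k ^ 2 * h r ≤ deriv (deriv h) r) :
    ∀ r ∈ Set.Icc a b,
      h r ≤ max (h a) (h b) *
        (Real.exp (-k * (r - a)) + Real.exp (-k * (b - r))) := by
  set M : ℝ := max (h a) (h b) with hM
  set W : ℝ → ℝ := fun r => M * (Real.exp (-k * (r - a)) + Real.exp (-k * (b - r))) with hWdef
  set W' : ℝ → ℝ := fun r =>
    M * (-k * Real.exp (-k * (r - a)) + k * Real.exp (-k * (b - r))) with hW'def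
  -- derivative facts for W
  have hW1 : ∀ r : ℝ, HasDerivAt W (W' r) r := by
    intro r
    have h1 : HasDerivAt (fun r : ℝ => -k * (r - a)) (-k) r := by
      simpa using ((hasDerivAt_id r).sub_const a).const_mul (-k)
    have h2 : HasDerivAt (fun r : ℝ => -k * (b - r)) k r := by
      simpa using ((hasDerivAt_id r).const_sub b).const_mul (-k)
    have := ((h1.exp).add (h2.exp)).const_mul M
    convert this using 1
    show M * _ = _
    ring
    all_goals rfl
  have hW2 : ∀ r : ℝ, HasDerivAt W' (k ^ 2 * W r) r := by
    intro r
    have h1 : HasDerivAt (fun r : ℝ => -k * (r - a)) (-k) r := by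
      simpa using ((hasDerivAt_id r).sub_const a).const_mul (-k)
    have h2 : HasDerivAt (fun r : ℝ => -k * (b - r)) k r := by
      simpa using ((hasDerivAt_id r).const_sub b).const_mul (-k)
    have := (((h1.exp).const_mul (-k)).add ((h2.exp).const_mul k)).const_mul M
    convert this using 1
    show k ^ 2 * (M * _) = _
    ring
    all_goals rfl
  have hWderiv : deriv W = W' := funext fun r => (hW1 r).deriv
  have hWcont : Continuous W := continuous_iff_continuousAt.mpr fun r => (hW1 r).continuousAt
  -- h a ≥ 0 and h b ≥ 0
  have hcl : Set.Icc a b = closure (Set.Ioo a b) := (closure_Ioo hab.ne).symm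
  have hne : ∀ c ∈ Set.Icc a b, 0 ≤ h c := by
    intro c hc
    have hnb : (nhdsWithin c (Set.Ioo a b)).NeBot :=
      mem_closure_iff_nhdsWithin_neBot.mp (hcl ▸ hc)
    have ht : Filter.Tendsto h (nhdsWithin c (Set.Ioo a b)) (nhds (h c)) :=
      (hh.continuousOn c hc).mono_left (nhdsWithin_mono _ Set.Ioo_subset_Icc_self)
    exact ge_of_tendsto ht (eventually_mem_nhdsWithin.mono fun x hx => hpos x hx)
  have hM0 : 0 ≤ M := le_trans (hne a ⟨le_refl a, hab.le⟩) (le_max_left _ _)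
  -- boundary values
  set g : ℝ → ℝ := fun r => W r - h r with hgdef
  have hga : 0 ≤ g a := by
    have h0 : h a ≤ M * 1 := by rw [mul_one]; exact le_max_left _ _
    have h2 : M * 1 ≤ W a := by
      apply mul_le_mul_of_nonneg_left _ hM0
      rw [show -k * (a - a) = 0 by ring, Real.exp_zero]
      linarith [Real.exp_pos (-k * (b - a))]
    simp only [hgdef]
    have : h a ≤ W a := le_trans h0 h2
    linarith
  have hgb : 0 ≤ g b := by
    have h0 : h b ≤ M * 1 := by rw [mul_one]; exact le_max_right _ _
    have h2 : M * 1 ≤ W b := by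
      apply mul_le_mul_of_nonneg_left _ hM0
      rw [show -k * (b - b) = 0 by ring, Real.exp_zero]
      linarith [Real.exp_pos (-k * (b - a))]
    simp only [hgdef]
    have : h b ≤ W b := le_trans h0 h2
    linarith
  have hgcont : ContinuousOn g (Set.Icc a b) :=
    (hWcont.continuousOn).sub hh.continuousOn
  -- goal reduces to 0 ≤ g on Icc
  suffices hfin : ∀ r ∈ Set.Icc a b, 0 ≤ g r by
    intro r hr
    have := hfin r hr
    simp only [hgdef] at this
    show h r ≤ W r
    linarith
  -- min of g on the compact interval
  obtain ⟨c, hcmem, hcmin⟩ :=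
    (isCompact_Icc).exists_isMinOn (Set.nonempty_Icc.mpr hab.le) hgcont
  intro r hr
  by_contra hcon
  push_neg at hcon
  have hgc : g c < 0 := lt_of_le_of_lt (hcmin hr) hcon
  have hcIoo : c ∈ Set.Ioo a b := by
    rcases hcmem with ⟨h1, h2⟩
    rcases h1.lt_or_eq with h1 | h1
    · rcases h2.lt_or_eq with h2 | h2
      · exact ⟨h1, h2⟩
      · exact absurd hgc (by rw [h2]; linarith)
    · exact absurd hgc (by rw [← h1]; linarith)
  -- differentiability of h near interior points
  have hhIoo : ContDiffOn ℝ 2 h (Set.Ioo a b) := hh.mono Set.Ioo_subset_Icc_self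
  have hdiff1 : ∀ x ∈ Set.Ioo a b, DifferentiableAt ℝ h x := fun x hx =>
    (hhIoo.differentiableOn (by norm_num)).differentiableAt (isOpen_Ioo.mem_nhds hx)
  have hdh : ContDiffOn ℝ 1 (deriv h) (Set.Ioo a b) := by
    have := (contDiffOn_succ_iff_deriv_of_isOpen (n := 1) (f := h) isOpen_Ioo).mp
      (by exact_mod_cast hhIoo)
    exact this.2.2
  have hdiff2 : ∀ x ∈ Set.Ioo a b, DifferentiableAt ℝ (deriv h) x := fun x hx =>
    (hdh.differentiableOn (by norm_num)).differentiableAt (isOpen_Ioo.mem_nhds hx)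
  -- deriv g = W' - deriv h on Ioo
  have hgderiv : ∀ x ∈ Set.Ioo a b, deriv g x = W' x - deriv h x := by
    intro x hx
    exact ((hW1 x).sub (hdiff1 x hx).hasDerivAt).deriv
  -- find a ball around c where g < 0 and within Ioo
  have hgC : ContinuousAt g c := by
    have : Set.Icc a b ∈ nhds c := Icc_mem_nhds hcIoo.1 hcIoo.2
    exact (hgcont.continuousAt this)
  have hev : ∀ᶠ x in nhds c, g x < 0 ∧ x ∈ Set.Ioo a b := by
    filter_upwards [hgC.eventually_lt_const hgc, isOpen_Ioo.mem_nhds hcIoo] with x h1 h2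
    exact ⟨h1, h2⟩
  obtain ⟨δ, hδ, hball⟩ := Metric.eventually_nhds_iff_ball.mp hev
  -- g is strictly concave on the ball
  have hconc : StrictConcaveOn ℝ (Metric.ball c δ) g := by
    apply strictConcaveOn_of_deriv2_neg (convex_ball c δ)
      (hgcont.mono fun x hx => Set.Ioo_subset_Icc_self (hball x hx).2)
    intro x hx
    rw [Metric.isOpen_ball.interior_eq] at hx
    obtain ⟨hgx, hxIoo⟩ := hball x hx
    show deriv^[2] g x < 0
    have : deriv^[2] g x = deriv (deriv g) x := by
      simp [Function.iterate_succ, Function.iterate_one]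
    rw [this]
    have heq : deriv g =ᶠ[nhds x] fun y => W' y - deriv h y := by
      filter_upwards [isOpen_Ioo.mem_nhds hxIoo] with y hy using hgderiv y hy
    rw [heq.deriv_eq]
    have : deriv (fun y => W' y - deriv h y) x = k ^ 2 * W x - deriv (deriv h) x :=
      ((hW2 x).sub (hdiff2 x hxIoo).hasDerivAt).deriv
    rw [this]
    have h1 := hconv x hxIoo
    have h2 : k ^ 2 * W x - k ^ 2 * h x = k ^ 2 * g x := by simp [hgdef]; ring
    nlinarith [sq_nonneg k, mul_pos (pow_pos hk 2) (neg_pos.mpr hgx)]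
  -- contradiction with the minimum at c
  have hx1 : c - δ / 2 ∈ Metric.ball c δ := by
    simp [Real.dist_eq]
    rw [abs_of_pos hδ]; linarith
  have hx2 : c + δ / 2 ∈ Metric.ball c δ := by
    simp [Real.dist_eq]
    rw [abs_of_pos hδ]; linarith
  have hlt := hconc.2 hx1 hx2 (by linarith) (by norm_num : (0:ℝ) < 1/2)
    (by norm_num : (0:ℝ) < 1/2) (by norm_num)
  have hmid : (1/2 : ℝ) • (c - δ/2) + (1/2 : ℝ) • (c + δ/2) = c := by
    simp [smul_eq_mul]; ring
  rw [hmid] at hlt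
  have hm1 : g c ≤ g (c - δ/2) :=
    hcmin (Set.Ioo_subset_Icc_self (hball _ hx1).2)
  have hm2 : g c ≤ g (c + δ/2) :=
    hcmin (Set.Ioo_subset_Icc_self (hball _ hx2).2)
  simp only [smul_eq_mul] at hlt
  linarith
end
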